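/- arXiv:2412.02319 — 7 statements merged into one kernel-verified Lean document; each statement's English description precedes it below -/
import Mathlib

section
/- Let M be a symmetric d×d matrix whose entries are real homogeneous polynomials of degree two in x₀, x₁, x₂, such that M(b) is positive semidefinite for all b ∈ ℝ³ and F = det(M) is not identically zero. If 0 ≠ a ∈ ℂ³ is such that the kernel of the complex d×d matrix M(a) has dimension at least two, then F(a) = 0 and all three partial derivatives of F vanish at a (i.e., a is a singular point of the zero set of F). -/
/-!
Differentiating `det M` one column at a time writes each partial derivative of `F` as a sum of
determinants of `M` with a single column `k` differentiated. A kernel of `M(a)` of dimension at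
least two meets the hyperplane `v k = 0` in a nonzero vector, and such a vector stays in the
kernel whatever column `k` is replaced by, so every summand vanishes at `a`.
-/

theorem Derivation.map_finset_prod {R A M ι : Type*} [CommSemiring R] [CommSemiring A]
    [Algebra R A] [AddCommMonoid M] [Module A M] [Module R M] [IsScalarTower R A M]
    [DecidableEq ι] (D : Derivation R A M) (s : Finset ι) (f : ι → A) :
    D (∏ i ∈ s, f i) = ∑ i ∈ s, (∏ j ∈ s.erase i, f j) • D (f i) := by
  induction s using Finset.induction_on with
  | empty => simp
  | insert b s hb ih =>
    rw [Finset.prod_insert hb, D.leibniz, Finset.sum_insert hb, Finset.erase_insert hb, ih,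
      Finset.smul_sum, add_comm]
    congr 1
    refine Finset.sum_congr rfl fun i hi => ?_
    have hib : i ≠ b := fun h => hb (h ▸ hi)
    rw [Finset.erase_insert_of_ne hib.symm,
      Finset.prod_insert fun h => hb (Finset.mem_of_mem_erase h), smul_smul]

theorem Derivation.map_det {R A n : Type*} [CommRing R] [CommRing A] [Algebra R A]
    [Fintype n] [DecidableEq n] (D : Derivation R A A) (M : Matrix n n A) :
    D M.det = ∑ k : n, (M.updateCol k fun j => D (M j k)).det := by
  simp_rw [Matrix.det_apply, map_sum, Derivation.map_smul_of_tower, D.map_finset_prod,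
    Finset.smul_sum]
  rw [Finset.sum_comm]
  refine Finset.sum_congr rfl fun k _ => Finset.sum_congr rfl fun σ _ => ?_
  rw [← Finset.prod_erase_mul _ _ (Finset.mem_univ k), smul_eq_mul, Matrix.updateCol_self]
  congr 2
  exact Finset.prod_congr rfl fun i hi => (Matrix.updateCol_ne (Finset.ne_of_mem_erase hi)).symm

theorem Submodule.exists_ne_zero_mem_ker_of_one_lt_finrank {K V : Type*} [Field K]
    [AddCommGroup V] [Module K V] (W : Submodule K V) [FiniteDimensional K W]
    (f : V →ₗ[K] K) (hW : 1 < Module.finrank K W) : ∃ v ∈ W, v ≠ 0 ∧ f v = 0 := by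
  have hker : LinearMap.ker (f ∘ₗ W.subtype) ≠ ⊥ :=
    LinearMap.ker_ne_bot_of_finrank_lt (by simpa using hW)
  obtain ⟨x, hx, hx0⟩ := Submodule.exists_mem_ne_zero_of_ne_bot hker
  exact ⟨x, x.2, by simpa using hx0, hx⟩

theorem Matrix.updateCol_mulVec_of_apply_eq_zero {R n : Type*} [CommSemiring R] [Fintype n]
    [DecidableEq n] (A : Matrix n n R) (k : n) (c : n → R) {v : n → R} (hv : v k = 0) :
    (A.updateCol k c).mulVec v = A.mulVec v := by
  ext i
  refine Finset.sum_congr rfl fun j _ => ?_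
  by_cases hj : j = k
  · subst hj
    simp [hv]
  · simp [Matrix.updateCol_ne hj]

theorem Matrix.det_eq_zero_of_ker_mulVecLin_ne_bot {R n : Type*} [CommRing R] [IsDomain R]
    [Fintype n] [DecidableEq n] {A : Matrix n n R} (h : LinearMap.ker A.mulVecLin ≠ ⊥) :
    A.det = 0 := by
  obtain ⟨v, hv, hv0⟩ := Submodule.exists_mem_ne_zero_of_ne_bot h
  exact Matrix.exists_mulVec_eq_zero_iff.mp ⟨v, hv0, hv⟩

theorem Matrix.det_updateCol_eq_zero_of_two_le_finrank_ker {K n : Type*} [Field K] [Fintype n]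
    [DecidableEq n] {A : Matrix n n K} (h : 2 ≤ Module.finrank K (LinearMap.ker A.mulVecLin))
    (k : n) (c : n → K) : (A.updateCol k c).det = 0 := by
  obtain ⟨v, hv, hv0, hvk⟩ :=
    (LinearMap.ker A.mulVecLin).exists_ne_zero_mem_ker_of_one_lt_finrank (LinearMap.proj k) h
  exact Matrix.exists_mulVec_eq_zero_iff.mp
    ⟨v, hv0, (A.updateCol_mulVec_of_apply_eq_zero k c hvk).trans hv⟩

theorem singular_of_kernel_dim_ge_two_general
    (d : ℕ) (M : Matrix (Fin d) (Fin d) (MvPolynomial (Fin 3) ℝ))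
    (a : Fin 3 → ℂ)
    (hker : 2 ≤ Module.finrank ℂ
      (LinearMap.ker (Matrix.mulVecLin (M.map (fun p => MvPolynomial.aeval a p))))) :
    MvPolynomial.aeval a M.det = 0 ∧
      ∀ i : Fin 3, MvPolynomial.aeval a (MvPolynomial.pderiv i M.det) = 0 := by
  refine ⟨?_, fun i => ?_⟩
  · rw [AlgHom.map_det, AlgHom.mapMatrix_apply]
    exact Matrix.det_eq_zero_of_ker_mulVecLin_ne_bot
      (Submodule.one_le_finrank_iff.mp (one_le_two.trans hker))
  · rw [Derivation.map_det, map_sum]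
    refine Finset.sum_eq_zero fun k _ => ?_
    rw [AlgHom.map_det, AlgHom.mapMatrix_apply, Matrix.map_updateCol]
    exact Matrix.det_updateCol_eq_zero_of_two_le_finrank_ker hker k _

/-- If `M` is a symmetric matrix of real homogeneous quadratic forms which is positive
semidefinite at every real point and whose determinant `F` is not identically zero, then any
`0 ≠ a ∈ ℂ³` at which the evaluated matrix `M(a)` has kernel of dimension at least two is a
singular point of the zero set of `F`. -/
theorem singular_of_kernel_dim_ge_two
    (d : ℕ) (M : Matrix (Fin d) (Fin d) (MvPolynomial (Fin 3) ℝ))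
    (hsymm : M.IsSymm)
    (hhom : ∀ i j, (M i j).IsHomogeneous 2)
    (hpsd : ∀ b : Fin 3 → ℝ, (M.map (MvPolynomial.eval b)).PosSemidef)
    (hF : M.det ≠ 0)
    (a : Fin 3 → ℂ) (ha : a ≠ 0)
    (hker : 2 ≤ Module.finrank ℂ
      (LinearMap.ker (Matrix.mulVecLin (M.map (fun p => MvPolynomial.aeval a p))))) :
    MvPolynomial.aeval a M.det = 0 ∧
      ∀ i : Fin 3, MvPolynomial.aeval a (MvPolynomial.pderiv i M.det) = 0 :=
  singular_of_kernel_dim_ge_two_general d M a hker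
end

section
/- The zero set of the Robinson polynomial R has exactly ten singular points in the complex projective plane, all of them real: a point 0 ≠ a ∈ ℂ³ satisfies R(a) = 0 together with the vanishing of all three partial derivatives of R at a if and only if a is a complex scalar multiple of one of the ten real points (1,1,1), (1,1,−1), (1,−1,1), (1,−1,−1), (0,1,1), (0,1,−1), (1,0,1), (1,0,−1), (1,1,0), (1,−1,0), i.e., the points with homogeneous coordinates in {0,1,−1} such that at most one coordinate is 0. -/
open MvPolynomial

noncomputable section

/-- The Robinson polynomial. -/
def Robinson : MvPolynomial (Fin 3) ℝ :=
  X 0 ^ 6 - X 0 ^ 4 * X 1 ^ 2 - X 0 ^ 2 * X 1 ^ 4 + X 1 ^ 6 - X 0 ^ 4 * X 2 ^ 2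
    + 3 * X 0 ^ 2 * X 1 ^ 2 * X 2 ^ 2 - X 1 ^ 4 * X 2 ^ 2 - X 0 ^ 2 * X 2 ^ 4
    - X 1 ^ 2 * X 2 ^ 4 + X 2 ^ 6

/-- The ten real singular points of the Robinson curve: the points with homogeneous coordinates
in `{0, 1, -1}` such that at most one coordinate is `0`. -/
def robinsonSingularPoints : Set (Fin 3 → ℂ) :=
  {![1, 1, 1], ![1, 1, -1], ![1, -1, 1], ![1, -1, -1], ![0, 1, 1],
    ![0, 1, -1], ![1, 0, 1], ![1, 0, -1], ![1, 1, 0], ![1, -1, 0]}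

lemma pd3 (i : Fin 3) : pderiv i ((3 : MvPolynomial (Fin 3) ℝ)) = 0 := by
  rw [← map_ofNat (C : ℝ →+* MvPolynomial (Fin 3) ℝ) 3, pderiv_C]

lemma aevalR (a : Fin 3 → ℂ) : MvPolynomial.aeval a Robinson =
    a 0 ^ 6 - a 0 ^ 4 * a 1 ^ 2 - a 0 ^ 2 * a 1 ^ 4 + a 1 ^ 6 - a 0 ^ 4 * a 2 ^ 2
    + 3 * a 0 ^ 2 * a 1 ^ 2 * a 2 ^ 2 - a 1 ^ 4 * a 2 ^ 2 - a 0 ^ 2 * a 2 ^ 4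
    - a 1 ^ 2 * a 2 ^ 4 + a 2 ^ 6 := by
  simp [Robinson]

lemma aevalpd0 (a : Fin 3 → ℂ) : MvPolynomial.aeval a (pderiv 0 Robinson) =
    2 * a 0 * (3*a 0^4 - 2*a 0^2*a 1^2 - a 1^4 - 2*a 0^2*a 2^2 + 3*a 1^2*a 2^2 - a 2^4) := by
  simp [Robinson, pderiv_X, Pi.single_apply, pd3]
  ring

lemma aevalpd1 (a : Fin 3 → ℂ) : MvPolynomial.aeval a (pderiv 1 Robinson) =
    2 * a 1 * (3*a 1^4 - 2*a 0^2*a 1^2 - a 0^4 - 2*a 1^2*a 2^2 + 3*a 0^2*a 2^2 - a 2^4) := by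
  simp [Robinson, pderiv_X, Pi.single_apply, pd3]
  ring

lemma aevalpd2 (a : Fin 3 → ℂ) : MvPolynomial.aeval a (pderiv 2 Robinson) =
    2 * a 2 * (3*a 2^4 - 2*a 0^2*a 2^2 - a 0^4 - 2*a 1^2*a 2^2 + 3*a 0^2*a 1^2 - a 1^4) := by
  simp [Robinson, pderiv_X, Pi.single_apply, pd3]
  ring

/-- Two-variable case. -/
lemma caseB (u v : ℂ) (hP : 3*u^2 - 2*u*v - v^2 = 0) (hQ : 3*v^2 - 2*u*v - u^2 = 0) :
    u = v := by
  have d : (u - v) * (u + v) = 0 := by linear_combination (1/4)*hP - (1/4)*hQ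
  rcases mul_eq_zero.mp d with h | h
  · exact sub_eq_zero.mp h
  · have h2 : u ^ 2 = 0 := by linear_combination (1/4)*hP + ((1/4)*(u+v))*h
    have hu : u = 0 := pow_eq_zero_iff two_ne_zero |>.mp h2
    linear_combination 2*hu - h

/-- Three-variable case: the symmetric system forces all squares equal. -/
lemma caseA (u v w : ℂ)
    (hP : 3*u^2 - 2*u*v - v^2 - 2*u*w + 3*v*w - w^2 = 0)
    (hQ : 3*v^2 - 2*u*v - u^2 - 2*v*w + 3*u*w - w^2 = 0)
    (hS : 3*w^2 - 2*u*w - u^2 - 2*v*w + 3*u*v - v^2 = 0) :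
    u = v ∧ v = w := by
  have d1 : (u - v) * (4*u + 4*v - 5*w) = 0 := by linear_combination hP - hQ
  have d2 : (u - w) * (4*u + 4*w - 5*v) = 0 := by linear_combination hP - hS
  have d3 : (v - w) * (4*v + 4*w - 5*u) = 0 := by linear_combination hQ - hS
  rcases mul_eq_zero.mp d1 with h1 | h1 <;> rcases mul_eq_zero.mp d2 with h2 | h2 <;>
    rcases mul_eq_zero.mp d3 with h3 | h3
  · exact ⟨sub_eq_zero.mp h1, sub_eq_zero.mp h3⟩
  · exact ⟨sub_eq_zero.mp h1, by linear_combination h2 - h1⟩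
  · exact ⟨sub_eq_zero.mp h1, sub_eq_zero.mp h3⟩
  · -- u = v, 4u+4w-5v = 0, 4v+4w-5u = 0
    have hu : u = 0 := pow_eq_zero_iff (two_ne_zero) |>.mp (by
      linear_combination (16/3)*hP + (-20*u - (16/3)*v + (64/3)*w)*h1 + (-u + (4/3)*w)*h3)
    have hv : v = 0 := pow_eq_zero_iff (two_ne_zero) |>.mp (by
      linear_combination (16/3)*hP + (-21*u - (19/3)*v + (64/3)*w)*h1 + (-u + (4/3)*w)*h3)
    have hw : w = 0 := pow_eq_zero_iff (two_ne_zero) |>.mp (by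
      linear_combination (1/3)*hP + (-u - (1/3)*v + (7/3)*w)*h1 + ((1/3)*w)*h3)
    exact ⟨by rw [hu, hv], by rw [hv, hw]⟩
  · exact ⟨by linear_combination h2 - h3, sub_eq_zero.mp h3⟩
  · -- 4u+4v-5w = 0, u = w, 4v+4w-5u = 0
    have hu : u = 0 := pow_eq_zero_iff (two_ne_zero) |>.mp (by
      linear_combination (16/3)*hP + (-20*u + (64/3)*v - (16/3)*w)*h2 + (-u + (4/3)*v)*h3)
    have hv : v = 0 := pow_eq_zero_iff (two_ne_zero) |>.mp (by
      linear_combination (1/3)*hP + (-u + (7/3)*v - (1/3)*w)*h2 + ((1/3)*v)*h3)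
    have hw : w = 0 := pow_eq_zero_iff (two_ne_zero) |>.mp (by
      linear_combination (16/3)*hP + (-21*u + (64/3)*v - (19/3)*w)*h2 + (-u + (4/3)*v)*h3)
    exact ⟨by rw [hu, hv], by rw [hv, hw]⟩
  · -- 4u+4v-5w = 0, 4u+4w-5v = 0, v = w
    have hu : u = 0 := pow_eq_zero_iff (two_ne_zero) |>.mp (by
      linear_combination (1/3)*hP + ((-2/3)*u - v - (1/3)*w)*h3 + ((1/3)*v)*h1)
    have hv : v = 0 := pow_eq_zero_iff (two_ne_zero) |>.mp (by
      linear_combination (16/3)*hP + ((28/3)*u - 11*v - (16/3)*w)*h3 + (-4*u + (13/3)*v)*h1)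
    have hw : w = 0 := pow_eq_zero_iff (two_ne_zero) |>.mp (by
      linear_combination (16/3)*hP + ((28/3)*u - 12*v - (19/3)*w)*h3 + (-4*u + (13/3)*v)*h1)
    exact ⟨by rw [hu, hv], by rw [hv, hw]⟩
  · -- all three linear conditions
    have hw : w = 0 := by linear_combination (1/27)*h1 + (4/27)*h2 + (4/27)*h3
    have hv : v = 0 := by linear_combination (4/27)*h1 + (1/27)*h2 + (4/27)*h3
    have hu : u = 0 := by linear_combination (4/27)*h1 + (4/27)*h2 + (1/27)*h3
    exact ⟨by rw [hu, hv], by rw [hv, hw]⟩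

lemma solve (x y z : ℂ) (hne : ¬(x = 0 ∧ y = 0 ∧ z = 0))
    (h0 : x = 0 ∨ 3*x^4 - 2*x^2*y^2 - y^4 - 2*x^2*z^2 + 3*y^2*z^2 - z^4 = 0)
    (h1 : y = 0 ∨ 3*y^4 - 2*x^2*y^2 - x^4 - 2*y^2*z^2 + 3*x^2*z^2 - z^4 = 0)
    (h2 : z = 0 ∨ 3*z^4 - 2*x^2*z^2 - x^4 - 2*y^2*z^2 + 3*x^2*y^2 - y^4 = 0) :
    (y = x ∧ z = x) ∨ (y = x ∧ z = -x) ∨ (y = -x ∧ z = x) ∨ (y = -x ∧ z = -x) ∨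
    (x = 0 ∧ z = y) ∨ (x = 0 ∧ z = -y) ∨ (y = 0 ∧ z = x) ∨ (y = 0 ∧ z = -x) ∨
    (z = 0 ∧ y = x) ∨ (z = 0 ∧ y = -x) := by
  have sq_cases : ∀ s t : ℂ, s^2 = t^2 → s = t ∨ s = -t := by
    intro s t h
    have : (s - t) * (s + t) = 0 := by linear_combination h
    rcases mul_eq_zero.mp this with h' | h'
    · exact Or.inl (sub_eq_zero.mp h')
    · exact Or.inr (by linear_combination h')
  rcases h0 with hx | hP <;> rcases h1 with hy | hQ <;> rcases h2 with hz | hS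
  · exact absurd ⟨hx, hy, hz⟩ hne
  · -- x = 0, y = 0 : hS gives z = 0
    subst hx; subst hy
    have : z ^ 4 = 0 := by linear_combination (1/3)*hS
    exact absurd ⟨rfl, rfl, pow_eq_zero_iff (by norm_num : (4:ℕ) ≠ 0) |>.mp this⟩ hne
  · subst hx; subst hz
    have : y ^ 4 = 0 := by linear_combination (1/3)*hQ
    exact absurd ⟨rfl, pow_eq_zero_iff (by norm_num : (4:ℕ) ≠ 0) |>.mp this, rfl⟩ hne
  · -- x = 0 : two-variable case in y, z
    subst hx
    have h := caseB (y^2) (z^2) (by linear_combination hQ) (by linear_combination hS)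
    rcases sq_cases z y h.symm with h' | h'
    · exact Or.inr (Or.inr (Or.inr (Or.inr (Or.inl ⟨rfl, h'⟩))))
    · exact Or.inr (Or.inr (Or.inr (Or.inr (Or.inr (Or.inl ⟨rfl, h'⟩)))))
  · subst hy; subst hz
    have : x ^ 4 = 0 := by linear_combination (1/3)*hP
    exact absurd ⟨pow_eq_zero_iff (by norm_num : (4:ℕ) ≠ 0) |>.mp this, rfl, rfl⟩ hne
  · -- y = 0 : two-variable case in x, z
    subst hy
    have h := caseB (x^2) (z^2) (by linear_combination hP) (by linear_combination hS)
    rcases sq_cases z x h.symm with h' | h'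
    · exact Or.inr (Or.inr (Or.inr (Or.inr (Or.inr (Or.inr (Or.inl ⟨rfl, h'⟩))))))
    · exact Or.inr (Or.inr (Or.inr (Or.inr (Or.inr (Or.inr (Or.inr (Or.inl ⟨rfl, h'⟩)))))))
  · -- z = 0 : two-variable case in x, y
    subst hz
    have h := caseB (x^2) (y^2) (by linear_combination hP) (by linear_combination hQ)
    rcases sq_cases y x h.symm with h' | h'
    · exact Or.inr (Or.inr (Or.inr (Or.inr (Or.inr (Or.inr (Or.inr (Or.inr (Or.inl ⟨rfl, h'⟩))))))))
    · exact Or.inr (Or.inr (Or.inr (Or.inr (Or.inr (Or.inr (Or.inr (Or.inr (Or.inr ⟨rfl, h'⟩))))))))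
  · -- generic case : all squares equal
    obtain ⟨huv, hvw⟩ := caseA (x^2) (y^2) (z^2)
      (by linear_combination hP) (by linear_combination hQ) (by linear_combination hS)
    rcases sq_cases y x huv.symm with hy' | hy' <;> rcases sq_cases z y hvw.symm with hz' | hz'
    · exact Or.inl ⟨hy', by rw [hz', hy']⟩
    · exact Or.inr (Or.inl ⟨hy', by rw [hz', hy']⟩)
    · exact Or.inr (Or.inr (Or.inr (Or.inl ⟨hy', by rw [hz', hy']⟩)))
    · exact Or.inr (Or.inr (Or.inl ⟨hy', by rw [hz', hy']; ring⟩))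

/-- The zero set of the Robinson polynomial has exactly ten singular points in the complex
projective plane, all of them real: a nonzero `a ∈ ℂ³` is a singular point of the Robinson
curve if and only if it is a complex scalar multiple of one of the ten listed real points. -/
theorem robinson_singular_points (a : Fin 3 → ℂ) (ha : a ≠ 0) :
    (MvPolynomial.aeval a Robinson = 0 ∧
        ∀ i : Fin 3, MvPolynomial.aeval a (MvPolynomial.pderiv i Robinson) = 0) ↔
      ∃ (c : ℂ) (p : Fin 3 → ℂ), p ∈ robinsonSingularPoints ∧ a = c • p := by
  constructor
  · rintro ⟨-, hd⟩
    have hne : ¬(a 0 = 0 ∧ a 1 = 0 ∧ a 2 = 0) := by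
      rintro ⟨h0, h1, h2⟩
      apply ha
      funext i
      fin_cases i <;> assumption
    have e0 := hd 0; rw [aevalpd0] at e0
    have e1 := hd 1; rw [aevalpd1] at e1
    have e2 := hd 2; rw [aevalpd2] at e2
    have two : (2:ℂ) ≠ 0 := two_ne_zero
    have h0 : a 0 = 0 ∨ 3*(a 0)^4 - 2*(a 0)^2*(a 1)^2 - (a 1)^4 - 2*(a 0)^2*(a 2)^2 + 3*(a 1)^2*(a 2)^2 - (a 2)^4 = 0 := by
      rcases mul_eq_zero.mp e0 with h | h
      · rcases mul_eq_zero.mp h with h | h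
        · exact absurd h two
        · exact Or.inl h
      · exact Or.inr h
    have h1 : a 1 = 0 ∨ 3*(a 1)^4 - 2*(a 0)^2*(a 1)^2 - (a 0)^4 - 2*(a 1)^2*(a 2)^2 + 3*(a 0)^2*(a 2)^2 - (a 2)^4 = 0 := by
      rcases mul_eq_zero.mp e1 with h | h
      · rcases mul_eq_zero.mp h with h | h
        · exact absurd h two
        · exact Or.inl h
      · exact Or.inr h
    have h2 : a 2 = 0 ∨ 3*(a 2)^4 - 2*(a 0)^2*(a 2)^2 - (a 0)^4 - 2*(a 1)^2*(a 2)^2 + 3*(a 0)^2*(a 1)^2 - (a 1)^4 = 0 := by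
      rcases mul_eq_zero.mp e2 with h | h
      · rcases mul_eq_zero.mp h with h | h
        · exact absurd h two
        · exact Or.inl h
      · exact Or.inr h
    have key := solve (a 0) (a 1) (a 2) hne h0 h1 h2
    rcases key with ⟨hy, hz⟩ | ⟨hy, hz⟩ | ⟨hy, hz⟩ | ⟨hy, hz⟩ | ⟨hy, hz⟩ | ⟨hy, hz⟩ |
      ⟨hy, hz⟩ | ⟨hy, hz⟩ | ⟨hy, hz⟩ | ⟨hy, hz⟩
    · exact ⟨a 0, ![1,1,1], by simp [robinsonSingularPoints],
        funext fun i => by fin_cases i <;> simp [hy, hz]⟩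
    · exact ⟨a 0, ![1,1,-1], by simp [robinsonSingularPoints],
        funext fun i => by fin_cases i <;> simp [hy, hz]⟩
    · exact ⟨a 0, ![1,-1,1], by simp [robinsonSingularPoints],
        funext fun i => by fin_cases i <;> simp [hy, hz]⟩
    · exact ⟨a 0, ![1,-1,-1], by simp [robinsonSingularPoints],
        funext fun i => by fin_cases i <;> simp [hy, hz]⟩
    · exact ⟨a 1, ![0,1,1], by simp [robinsonSingularPoints],
        funext fun i => by fin_cases i <;> simp [hy, hz]⟩
    · exact ⟨a 1, ![0,1,-1], by simp [robinsonSingularPoints],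
        funext fun i => by fin_cases i <;> simp [hy, hz]⟩
    · exact ⟨a 0, ![1,0,1], by simp [robinsonSingularPoints],
        funext fun i => by fin_cases i <;> simp [hy, hz]⟩
    · exact ⟨a 0, ![1,0,-1], by simp [robinsonSingularPoints],
        funext fun i => by fin_cases i <;> simp [hy, hz]⟩
    · exact ⟨a 0, ![1,1,0], by simp [robinsonSingularPoints],
        funext fun i => by fin_cases i <;> simp [hy, hz]⟩
    · exact ⟨a 0, ![1,-1,0], by simp [robinsonSingularPoints],
        funext fun i => by fin_cases i <;> simp [hy, hz]⟩
  · rintro ⟨c, p, hp, rfl⟩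
    simp only [robinsonSingularPoints, Set.mem_insert_iff, Set.mem_singleton_iff] at hp
    have key : ∀ i : Fin 3, MvPolynomial.aeval (c • p) (MvPolynomial.pderiv i Robinson) = 0 := by
      intro i
      have hi : i = 0 ∨ i = 1 ∨ i = 2 := by omega
      rcases hi with rfl | rfl | rfl
      · rw [aevalpd0]; rcases hp with rfl|rfl|rfl|rfl|rfl|rfl|rfl|rfl|rfl|rfl <;>
          simp only [Pi.smul_apply, smul_eq_mul, Matrix.cons_val_zero, Matrix.cons_val_one,
            Matrix.head_cons, Matrix.cons_val_two, Matrix.tail_cons] <;> ring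
      · rw [aevalpd1]; rcases hp with rfl|rfl|rfl|rfl|rfl|rfl|rfl|rfl|rfl|rfl <;>
          simp only [Pi.smul_apply, smul_eq_mul, Matrix.cons_val_zero, Matrix.cons_val_one,
            Matrix.head_cons, Matrix.cons_val_two, Matrix.tail_cons] <;> ring
      · rw [aevalpd2]; rcases hp with rfl|rfl|rfl|rfl|rfl|rfl|rfl|rfl|rfl|rfl <;>
          simp only [Pi.smul_apply, smul_eq_mul, Matrix.cons_val_zero, Matrix.cons_val_one,
            Matrix.head_cons, Matrix.cons_val_two, Matrix.tail_cons] <;> ring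
    refine ⟨?_, key⟩
    rw [aevalR]
    rcases hp with rfl|rfl|rfl|rfl|rfl|rfl|rfl|rfl|rfl|rfl <;>
          simp only [Pi.smul_apply, smul_eq_mul, Matrix.cons_val_zero, Matrix.cons_val_one,
            Matrix.head_cons, Matrix.cons_val_two, Matrix.tail_cons] <;> ring
end
end

section
/- The polynomial obtained by substituting x₀ = (2x²+z²)z, x₁ = x(x²+2z²), x₂ = (x−z)(x+z)y into the Robinson polynomial R is divisible by x² + y² + z² in ℝ[x,y,z]; that is, the map π(x:y:z) = ((2x²+z²)z : x(x²+2z²) : (x−z)(x+z)y) maps the conic V(x²+y²+z²) into the zero set of R. -/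
open MvPolynomial

noncomputable section

/-- Substituting `x₀ = (2x² + z²)z`, `x₁ = x(x² + 2z²)`, `x₂ = (x − z)(x + z)y` into the
Robinson polynomial yields a polynomial divisible by `x² + y² + z²`; that is, the normalization
map `π` maps the conic `V(x² + y² + z²)` into the Robinson curve.  (Here `x = X 0`, `y = X 1`,
`z = X 2`.) -/
theorem conic_maps_into_robinson_curve :
    (X 0 ^ 2 + X 1 ^ 2 + X 2 ^ 2 : MvPolynomial (Fin 3) ℝ) ∣
      MvPolynomial.aeval
        ![(2 * X 0 ^ 2 + X 2 ^ 2) * X 2,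
          X 0 * (X 0 ^ 2 + 2 * X 2 ^ 2),
          (X 0 - X 2) * (X 0 + X 2) * X 1] Robinson := by
  refine ⟨X 0 ^ 16 - 2 * X 0 ^ 14 * X 1 ^ 2 + 7 * X 0 ^ 14 * X 2 ^ 2 + X 0 ^ 12 * X 1 ^ 4
    + X 0 ^ 12 * X 1 ^ 2 * X 2 ^ 2 + X 0 ^ 12 * X 2 ^ 4 - 6 * X 0 ^ 10 * X 1 ^ 4 * X 2 ^ 2
    + 9 * X 0 ^ 10 * X 1 ^ 2 * X 2 ^ 4 - 2 * X 0 ^ 10 * X 2 ^ 6 + 15 * X 0 ^ 8 * X 1 ^ 4 * X 2 ^ 4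
    - 8 * X 0 ^ 8 * X 1 ^ 2 * X 2 ^ 6 - 14 * X 0 ^ 8 * X 2 ^ 8 - 20 * X 0 ^ 6 * X 1 ^ 4 * X 2 ^ 6
    - 8 * X 0 ^ 6 * X 1 ^ 2 * X 2 ^ 8 - 2 * X 0 ^ 6 * X 2 ^ 10 + 15 * X 0 ^ 4 * X 1 ^ 4 * X 2 ^ 8
    + 9 * X 0 ^ 4 * X 1 ^ 2 * X 2 ^ 10 + X 0 ^ 4 * X 2 ^ 12 - 6 * X 0 ^ 2 * X 1 ^ 4 * X 2 ^ 10
    + X 0 ^ 2 * X 1 ^ 2 * X 2 ^ 12 + 7 * X 0 ^ 2 * X 2 ^ 14 + X 1 ^ 4 * X 2 ^ 12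
    - 2 * X 1 ^ 2 * X 2 ^ 14 + X 2 ^ 16, ?_⟩
  simp only [Robinson, map_add, map_sub, map_mul, map_pow, map_ofNat, aeval_X,
    Matrix.cons_val_zero, Matrix.cons_val_one, Matrix.head_cons, Matrix.cons_val_two,
    Matrix.tail_cons]
  ring
end
end

section
/- The Robinson polynomial R satisfies R(a) ≥ 0 for all a ∈ ℝ³, but R is not a sum of squares of real polynomials. -/
open MvPolynomial

noncomputable section

/-!
Nonnegativity: `R(x) = S(x₀², x₁², x₂²)`, where Schur's form
`S(a, b, c) = a(a-b)(a-c) + b(b-a)(b-c) + c(c-a)(c-b)` is nonnegative for `a, b, c ≥ 0`.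

Not a sum of squares: if `R = ∑ gᵢ²`, restricting to a line `t ↦ t • a` gives
`∑ gᵢ(t • a)² = R(a) t⁶`; in a sum of squares of real univariate polynomials neither the top nor
the bottom coefficients can cancel, so every `gᵢ` is a cubic form. Each `gᵢ` vanishes at the zeros
`(1, ±1, ±1)`, `(1, ±1, 0)`, `(1, 0, ±1)` of `R`, and a linear relation between the values of cubic
forms at these points and at `(1, 0, 0)` forces `gᵢ(1, 0, 0) = 0`. But `R(1, 0, 0) = 1`.
-/

theorem schur_inequality {R : Type*} [CommRing R] [LinearOrder R] [IsStrictOrderedRing R]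
    {a b c : R} (ha : 0 ≤ a) (hb : 0 ≤ b) (hc : 0 ≤ c) :
    0 ≤ a * (a - b) * (a - c) + b * (b - a) * (b - c) + c * (c - a) * (c - b) := by
  rcases le_total a b with hab | hab <;> rcases le_total b c with hbc | hbc <;>
    rcases le_total a c with hac | hac <;>
    nlinarith [mul_nonneg (mul_nonneg ha hb) hc,
      mul_nonneg ha (mul_nonneg (sub_nonneg.2 hab) (sub_nonneg.2 hac)),
      mul_nonneg hb (mul_nonneg (sub_nonneg.2 hab) (sub_nonneg.2 hbc)),
      mul_nonneg hc (mul_nonneg (sub_nonneg.2 hbc) (sub_nonneg.2 hac)),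
      mul_nonneg (sq_nonneg (a - b)) (add_nonneg ha hb),
      mul_nonneg (sq_nonneg (b - c)) (add_nonneg hb hc),
      mul_nonneg (sq_nonneg (a - c)) (add_nonneg ha hc)]

namespace Polynomial

variable {K ι : Type*} [Field K] [LinearOrder K] [IsStrictOrderedRing K]
  {s : Finset ι} {p : ι → K[X]} {c : K} {n : ℕ}

theorem natDegree_le_of_sum_sq_eq (h : ∑ i ∈ s, p i ^ 2 = C c * X ^ (2 * n)) {i : ι}
    (hi : i ∈ s) : (p i).natDegree ≤ n := by
  set m := s.sup fun i => (p i).natDegree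
  suffices m ≤ n from (Finset.le_sup (f := fun i => (p i).natDegree) hi).trans this
  by_contra! hnm
  have htop : ∀ j ∈ s, (p j).coeff m = 0 := by
    have hcoeff := congrArg (coeff · (2 * m)) h
    simp only [finsetSum_coeff, coeff_C_mul_X_pow, if_neg (by omega : 2 * m ≠ 2 * n)] at hcoeff
    rw [Finset.sum_congr rfl fun j hj =>
      coeff_pow_of_natDegree_le (Finset.le_sup (f := fun i => (p i).natDegree) hj)] at hcoeff
    simpa only [sq, Finset.sum_mul_self_eq_zero_iff] using hcoeff
  obtain ⟨j, hj, hjm⟩ := s.exists_mem_eq_sup ⟨i, hi⟩ fun i => (p i).natDegree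
  have hpj : p j = 0 := leadingCoeff_eq_zero.mp (by rw [leadingCoeff, ← hjm]; exact htop j hj)
  rw [hpj, natDegree_zero] at hjm
  omega

theorem coeff_eq_zero_of_lt_of_sum_sq_eq (h : ∑ i ∈ s, p i ^ 2 = C c * X ^ (2 * n)) {d : ℕ}
    (hd : d < n) : ∀ i ∈ s, (p i).coeff d = 0 := by
  induction d using Nat.strong_induction_on with
  | _ d ih =>
    have hdvd : ∀ j ∈ s, X ^ d ∣ p j := fun j hj =>
      X_pow_dvd_iff.mpr fun e he => ih e he (he.trans hd) j hj
    choose! q hq using hdvd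
    have hq_sum : ∑ j ∈ s, q j ^ 2 = C c * X ^ (2 * (n - d)) := by
      refine mul_left_cancel₀ (pow_ne_zero (2 * d) X_ne_zero) ?_
      calc X ^ (2 * d) * ∑ j ∈ s, q j ^ 2 = ∑ j ∈ s, p j ^ 2 := by
            rw [Finset.mul_sum]
            exact Finset.sum_congr rfl fun j hj => by rw [hq j hj]; ring
        _ = X ^ (2 * d) * (C c * X ^ (2 * (n - d))) := by
            rw [h, mul_left_comm, ← pow_add]
            congr 3
            omega
    have hq_zero : ∀ j ∈ s, (q j).coeff 0 = 0 := by
      have hcoeff := congrArg (coeff · 0) hq_sum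
      rw [finsetSum_coeff, coeff_C_mul_X_pow, if_neg (by omega)] at hcoeff
      simp only [sq, mul_coeff_zero] at hcoeff
      exact (Finset.sum_mul_self_eq_zero_iff _ _).mp hcoeff
    intro i hi
    rw [hq i hi, coeff_X_pow_mul', if_pos le_rfl, Nat.sub_self, hq_zero i hi]

theorem coeff_eq_zero_of_sum_sq_eq (h : ∑ i ∈ s, p i ^ 2 = C c * X ^ (2 * n)) {i : ι}
    (hi : i ∈ s) {d : ℕ} (hd : d ≠ n) : (p i).coeff d = 0 := by
  rcases hd.lt_or_gt with hlt | hgt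
  · exact coeff_eq_zero_of_lt_of_sum_sq_eq h hlt i hi
  · exact coeff_eq_zero_of_natDegree_lt ((natDegree_le_of_sum_sq_eq h hi).trans_lt hgt)

end Polynomial

namespace MvPolynomial

variable {σ : Type*}

theorem coeff_aeval_C_mul_X {R : Type*} [CommSemiring R] (a : σ → R) (p : MvPolynomial σ R)
    (d : ℕ) :
    ((aeval fun j => Polynomial.C (a j) * Polynomial.X) p).coeff d =
      eval a (homogeneousComponent d p) := by
  induction p using MvPolynomial.induction_on' with
  | monomial m r =>
    have hprod : (m.prod fun j k => (Polynomial.C (a j) * Polynomial.X) ^ k) =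
        Polynomial.C (m.prod fun j k => a j ^ k) * Polynomial.X ^ m.degree := by
      simp only [Finsupp.prod, mul_pow, Finset.prod_mul_distrib, Finset.prod_pow_eq_pow_sum,
        map_prod, map_pow, Finsupp.degree_apply]
    rw [homogeneousComponent_of_mem (isHomogeneous_monomial r rfl), aeval_monomial, hprod,
      Polynomial.algebraMap_apply, Algebra.algebraMap_self, RingHom.id_apply, ← mul_assoc,
      ← Polynomial.C_mul, Polynomial.coeff_C_mul_X_pow, apply_ite (eval a), eval_monomial,
      map_zero]
  | add p q hp hq => simp only [map_add, Polynomial.coeff_add, hp, hq]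

theorem IsHomogeneous.aeval_C_mul_X {R : Type*} [CommSemiring R] {p : MvPolynomial σ R} {n : ℕ}
    (hp : p.IsHomogeneous n) (a : σ → R) :
    MvPolynomial.aeval (fun j => Polynomial.C (a j) * Polynomial.X) p =
      Polynomial.C (eval a p) * Polynomial.X ^ n := by
  ext d
  rw [coeff_aeval_C_mul_X, homogeneousComponent_of_mem hp, Polynomial.coeff_C_mul_X_pow,
    apply_ite (eval a), map_zero]

theorem isHomogeneous_of_coeff_aeval_C_mul_X_eq_zero {R : Type*} [CommRing R] [IsDomain R]
    [Infinite R] {p : MvPolynomial σ R} {n : ℕ}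
    (h : ∀ (a : σ → R) (d : ℕ), d ≠ n →
      ((aeval fun j => Polynomial.C (a j) * Polynomial.X) p).coeff d = 0) :
    p.IsHomogeneous n := by
  intro m hm
  by_contra hne
  replace hne : m.degree ≠ n := by rwa [Finsupp.degree_eq_weight_one, ← Pi.one_def]
  have hzero : homogeneousComponent m.degree p = 0 := MvPolynomial.funext fun a => by
    rw [map_zero, ← coeff_aeval_C_mul_X]
    exact h a _ hne
  apply hm
  simpa [coeff_homogeneousComponent] using congrArg (coeff m) hzero

theorem isHomogeneous_of_sum_sq {K ι : Type*} [Field K] [LinearOrder K] [IsStrictOrderedRing K]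
    {s : Finset ι} {g : ι → MvPolynomial σ K} {n : ℕ}
    (h : (∑ i ∈ s, g i ^ 2).IsHomogeneous (2 * n)) {i : ι} (hi : i ∈ s) :
    (g i).IsHomogeneous n :=
  isHomogeneous_of_coeff_aeval_C_mul_X_eq_zero fun a _ hd => by
    have hline := h.aeval_C_mul_X a
    rw [map_sum (MvPolynomial.aeval _)] at hline
    simp only [map_pow] at hline
    exact Polynomial.coeff_eq_zero_of_sum_sq_eq hline hi hd

/-- On `x₀ = 1` a cubic form is a cubic in `(x₁, x₂)`, and `t³ = t` on `{-1, 0, 1}`; the weights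
`-1/4` at the corners and `1/2` at the edge midpoints of the square `[-1, 1]²` then reproduce the
value at its centre. -/
theorem four_mul_eval_eq_of_isHomogeneous_three {R : Type*} [CommRing R]
    {q : MvPolynomial (Fin 3) R} (hq : q.IsHomogeneous 3) :
    4 * eval ![1, 0, 0] q =
      2 * (eval ![1, 1, 0] q + eval ![1, -1, 0] q + eval ![1, 0, 1] q + eval ![1, 0, -1] q)
        - (eval ![1, 1, 1] q + eval ![1, 1, -1] q + eval ![1, -1, 1] q + eval ![1, -1, -1] q) := by
  simp only [eval_eq', mul_add, Finset.mul_sum, ← Finset.sum_add_distrib, ← Finset.sum_sub_distrib]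
  refine Finset.sum_congr rfl fun m hm => ?_
  have hdeg : m 0 + m 1 + m 2 = 3 := by
    simpa [Finsupp.weight_apply, Finsupp.sum_fintype, Fin.sum_univ_three] using
      hq (mem_support_iff.mp hm)
  simp only [Fin.prod_univ_three, Matrix.cons_val_zero, Matrix.cons_val_one, Matrix.cons_val_two,
    Matrix.head_cons, Matrix.tail_cons, one_pow, one_mul]
  have h1 : m 1 ≤ 3 := by omega
  have h2 : m 2 ≤ 3 := by omega
  interval_cases m 1 <;> interval_cases m 2 <;> first | omega | ring

end MvPolynomial

theorem eval_robinson (a : Fin 3 → ℝ) :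
    eval a Robinson =
      a 0 ^ 2 * (a 0 ^ 2 - a 1 ^ 2) * (a 0 ^ 2 - a 2 ^ 2)
        + a 1 ^ 2 * (a 1 ^ 2 - a 0 ^ 2) * (a 1 ^ 2 - a 2 ^ 2)
        + a 2 ^ 2 * (a 2 ^ 2 - a 0 ^ 2) * (a 2 ^ 2 - a 1 ^ 2) := by
  simp only [Robinson, map_add, map_sub, map_mul, map_pow, map_ofNat, eval_X]
  ring

theorem isHomogeneous_robinson : Robinson.IsHomogeneous 6 :=
  isHomogeneous_of_coeff_aeval_C_mul_X_eq_zero fun a d hd => by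
    have hline : aeval (fun j => Polynomial.C (a j) * Polynomial.X) Robinson =
        Polynomial.C (eval a Robinson) * Polynomial.X ^ 6 := by
      simp only [Robinson, map_add, map_sub, map_mul, map_pow, map_ofNat, aeval_X, eval_X]
      ring
    rw [hline, Polynomial.coeff_C_mul_X_pow, if_neg hd]

/-- The Robinson polynomial is nonnegative on `ℝ³` but is not a sum of squares of real
polynomials. -/
theorem robinson_nonneg_and_not_sos :
    (∀ a : Fin 3 → ℝ, 0 ≤ MvPolynomial.eval a Robinson) ∧
      ¬ ∃ (k : ℕ) (g : Fin k → MvPolynomial (Fin 3) ℝ), Robinson = ∑ i, g i ^ 2 := by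
  refine ⟨fun a => ?_, ?_⟩
  · rw [eval_robinson]
    exact schur_inequality (sq_nonneg _) (sq_nonneg _) (sq_nonneg _)
  rintro ⟨k, g, hg⟩
  have hvanish (i : Fin k) (a : Fin 3 → ℝ) (ha : eval a Robinson = 0) : eval a (g i) = 0 := by
    simp only [hg, map_sum, sq, map_mul] at ha
    exact (Finset.sum_mul_self_eq_zero_iff _ _).mp ha i (Finset.mem_univ i)
  have hcubic (i : Fin k) : (g i).IsHomogeneous 3 :=
    isHomogeneous_of_sum_sq (hg ▸ isHomogeneous_robinson) (Finset.mem_univ i)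
  have hzero (i : Fin k) : eval ![1, 0, 0] (g i) = 0 := by
    have key := four_mul_eval_eq_of_isHomogeneous_three (hcubic i)
    rw [hvanish i ![1, 1, 0], hvanish i ![1, -1, 0], hvanish i ![1, 0, 1], hvanish i ![1, 0, -1],
      hvanish i ![1, 1, 1], hvanish i ![1, 1, -1], hvanish i ![1, -1, 1],
      hvanish i ![1, -1, -1]] at key
    · linarith
    all_goals norm_num [eval_robinson, Matrix.cons_val_two, Matrix.tail_cons]
  have hone : eval ![1, 0, 0] Robinson = 1 := by
    norm_num [eval_robinson, Matrix.cons_val_two, Matrix.tail_cons]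
  simp [hg, hzero] at hone
end
end

section
/- In the blow-up setting of an isolated real node, the image of A in A' under π is exactly { f ∈ A' | there exists c ∈ ℝ with f − c·1 ∈ 𝔫 }, where 𝔫 is the maximal ideal of A' generated by the images of x and y; i.e., A consists precisely of those elements of its normalization A' whose residue in A'/𝔫 ≅ ℂ lies in ℝ. -/
open MvPolynomial

noncomputable section

/-- The maximal ideal `(x,y)` of `ℝ[x,y]`, where `x = X 0` and `y = X 1`. -/
def mIdeal : Ideal (MvPolynomial (Fin 2) ℝ) := Ideal.span {X 0, X 1}

theorem mIdeal_eq_ker :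
    mIdeal = RingHom.ker (constantCoeff : MvPolynomial (Fin 2) ℝ →+* ℝ) := by
  have himg : (MvPolynomial.X '' (Set.univ : Set (Fin 2)) :
      Set (MvPolynomial (Fin 2) ℝ)) = {X 0, X 1} := by
    ext p
    simp [Set.eq_univ_iff_forall, Fin.exists_fin_two, Set.mem_image]
    tauto
  ext x
  rw [mIdeal, ← himg, mem_ideal_span_X_image]
  simp only [RingHom.mem_ker, constantCoeff_eq, ← MvPolynomial.notMem_support_iff]
  constructor
  · intro h h0
    obtain ⟨i, _, hi⟩ := h 0 h0
    simp at hi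
  · intro h m hm
    by_contra hc
    push_neg at hc
    have : m = 0 := by
      ext i
      simpa using hc i (Set.mem_univ i)
    exact h (this ▸ hm)

instance mIdeal_isMaximal : mIdeal.IsMaximal := by
  rw [mIdeal_eq_ker]
  exact RingHom.ker_isMaximal_of_surjective _ (fun r => ⟨C r, by simp⟩)

instance mIdeal_isPrime : mIdeal.IsPrime := Ideal.IsMaximal.isPrime' _

/-- `R₀`, the localization of `ℝ[x,y]` at the maximal ideal `(x,y)`. -/
abbrev R0 := Localization.AtPrime mIdeal

instance R0commRing : CommRing R0 := inferInstance

/-- The image of `x` in `R₀`. -/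
def xm : R0 := algebraMap (MvPolynomial (Fin 2) ℝ) R0 (X 0)

/-- The image of `y` in `R₀`. -/
def ym : R0 := algebraMap (MvPolynomial (Fin 2) ℝ) R0 (X 1)

/-- The ideal `(y - x·z)` of `R₀[z]`. -/
def sRel : Ideal (Polynomial R0) := Ideal.span {Polynomial.C ym - Polynomial.C xm * Polynomial.X}

/-- The ring `S = R₀[z]/(y - x·z)`. -/
abbrev Sring := Polynomial R0 ⧸ sRel

instance SringCommRing : CommRing Sring := inferInstance

/-- The canonical map `R₀ → S`. -/
def toS : R0 →+* Sring := (Ideal.Quotient.mk sRel).comp Polynomial.C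

/-- The image of `z` in `S`. -/
def zS : Sring := Ideal.Quotient.mk sRel Polynomial.X

/-- `F = F₂ + ⋯ + Fₙ`. -/
def Fpoly (n : ℕ) (Fi : ℕ → MvPolynomial (Fin 2) ℝ) : MvPolynomial (Fin 2) ℝ :=
  ∑ i ∈ Finset.Icc 2 n, Fi i

/-- The coefficient embedding `ℝ → R₀[z]`. -/
def coeffHom : ℝ →+* Polynomial R0 :=
  Polynomial.C.comp ((algebraMap (MvPolynomial (Fin 2) ℝ) R0).comp
    (MvPolynomial.C : ℝ →+* MvPolynomial (Fin 2) ℝ))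

/-- For `p ∈ ℝ[x,y]`, the polynomial `p(1,z) ∈ R₀[z]`. -/
def subst1z (p : MvPolynomial (Fin 2) ℝ) : Polynomial R0 :=
  MvPolynomial.eval₂ coeffHom ![1, Polynomial.X] p

/-- `F' = F₂(1,z) + x·F₃(1,z) + ⋯ + x^{n-2}·Fₙ(1,z)`, as an element of `S`. -/
def F'elem (n : ℕ) (Fi : ℕ → MvPolynomial (Fin 2) ℝ) : Sring :=
  Ideal.Quotient.mk sRel (∑ i ∈ Finset.Icc 2 n, Polynomial.C xm ^ (i - 2) * subst1z (Fi i))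

/-- `A = R₀/(F)`. -/
abbrev Aring (n : ℕ) (Fi : ℕ → MvPolynomial (Fin 2) ℝ) :=
  R0 ⧸ Ideal.span {algebraMap (MvPolynomial (Fin 2) ℝ) R0 (Fpoly n Fi)}

/-- `A' = S/(F')`. -/
abbrev A'ring (n : ℕ) (Fi : ℕ → MvPolynomial (Fin 2) ℝ) := Sring ⧸ Ideal.span {F'elem n Fi}

/-- The quotient map `R₀ → A`. -/
def toA (n : ℕ) (Fi : ℕ → MvPolynomial (Fin 2) ℝ) : R0 →+* Aring n Fi := Ideal.Quotient.mk _

/-- The natural map `R₀ → A'`. -/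
def toA' (n : ℕ) (Fi : ℕ → MvPolynomial (Fin 2) ℝ) : R0 →+* A'ring n Fi :=
  (Ideal.Quotient.mk (Ideal.span {F'elem n Fi})).comp toS

/-- The image of `z` in `A'`. -/
def zA' (n : ℕ) (Fi : ℕ → MvPolynomial (Fin 2) ℝ) : A'ring n Fi :=
  Ideal.Quotient.mk _ zS

/-- The ideal `𝔫 = (x, y)` of `A'`. -/
def nId (n : ℕ) (Fi : ℕ → MvPolynomial (Fin 2) ℝ) : Ideal (A'ring n Fi) :=
  Ideal.span {toA' n Fi xm, toA' n Fi ym}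

/-- The constant embedding `ℝ → A'`. -/
def constA' (n : ℕ) (Fi : ℕ → MvPolynomial (Fin 2) ℝ) : ℝ →+* A'ring n Fi :=
  (toA' n Fi).comp ((algebraMap (MvPolynomial (Fin 2) ℝ) R0).comp
    (MvPolynomial.C : ℝ →+* MvPolynomial (Fin 2) ℝ))

/-!
Write `x, y, z` for the images in `A'`, so that `x z = y`. Since the residue field of `R₀` is `ℝ`,
every element of `π(A)`, the image of `R₀`, is a real constant modulo `𝔫`. Conversely, expanding
`F' = 0` monomial by monomial shows `u z² ∈ R₀ + R₀ z` for some `u ∈ R₀` with constant term the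
`y²`-coefficient of `F₂`; that coefficient is nonzero because otherwise `x ∣ F₂`. So `u` is a unit,
`A' = R₀[z] = R₀ + R₀ z`, hence `x A'` lies in the image of `R₀` (as `x z = y`), and so does
`𝔫 = x A' + x z A'`.
-/

theorem MvPolynomial.X_zero_dvd_of_coeff_single_one_eq_zero {R : Type*} [CommRing R]
    {p : MvPolynomial (Fin 2) R} {k : ℕ} (hp : p.IsHomogeneous k)
    (hc : coeff (Finsupp.single 1 k) p = 0) : X 0 ∣ p := by
  rw [X_dvd_iff_modMonomial_eq_zero]
  ext m
  rw [coeff_zero]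
  by_cases hle : Finsupp.single 0 1 ≤ m
  · exact coeff_modMonomial_of_le _ hle
  rw [coeff_modMonomial_of_not_le _ hle]
  have hm0 : m 0 = 0 := by simpa [Finsupp.single_le_iff] using hle
  by_cases hm : m = Finsupp.single 1 k
  · rwa [hm]
  refine hp.coeff_eq_zero fun hdeg => hm ?_
  rw [Finsupp.degree_eq_sum, Fin.sum_univ_two, hm0, zero_add] at hdeg
  ext j
  fin_cases j <;> simp [hm0, hdeg]

theorem MvPolynomial.coeff_single_one_ne_zero_of_irreducible {R : Type*} [CommRing R]
    [Nontrivial R] {p : MvPolynomial (Fin 2) R} {k : ℕ} (hp : p.IsHomogeneous k) (hk : k ≠ 1)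
    (hirr : Irreducible p) : coeff (Finsupp.single 1 k) p ≠ 0 := by
  intro hc
  obtain ⟨g, rfl⟩ := X_zero_dvd_of_coeff_single_one_eq_zero hp hc
  have hg : IsUnit g := (hirr.isUnit_or_isUnit rfl).resolve_left fun hX => by
    simpa using hX.map (constantCoeff : MvPolynomial (Fin 2) R →+* R)
  have hcoeff : coeff (Finsupp.single 0 1) (X 0 * g) = constantCoeff g := by
    simpa [constantCoeff_eq] using coeff_X_mul 0 (0 : Fin 2) g
  refine (hg.map constantCoeff).ne_zero (hcoeff ▸ hp.coeff_eq_zero ?_)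
  simpa using hk.symm

theorem MvPolynomial.IsHomogeneous.add_eq_of_mem_support {R : Type*} [CommSemiring R]
    {p : MvPolynomial (Fin 2) R} {k : ℕ} (hp : p.IsHomogeneous k) {m : Fin 2 →₀ ℕ}
    (hm : m ∈ p.support) : m 0 + m 1 = k := by
  by_contra h
  exact mem_support_iff.mp hm (hp.coeff_eq_zero (by rwa [Finsupp.degree_eq_sum, Fin.sum_univ_two]))

theorem Submodule.span_one_eq_top_of_sq_mem {R B : Type*} [CommRing R] [CommRing B] [Algebra R B]
    {z : B} (hgen : Function.Surjective (Polynomial.aeval (R := R) z))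
    (hz : z ^ 2 ∈ span R {1, z}) : span R {(1 : B), z} = ⊤ := by
  have hmul : ∀ w ∈ span R {(1 : B), z}, w * z ∈ span R {(1 : B), z} := by
    intro w hw
    obtain ⟨c, d, rfl⟩ := mem_span_pair.mp hw
    rw [add_mul, smul_mul_assoc, smul_mul_assoc, one_mul, ← sq]
    exact add_mem (smul_mem _ c (subset_span (by simp))) (smul_mem _ d hz)
  refine eq_top_iff.mpr ?_
  rintro b -
  obtain ⟨p, rfl⟩ := hgen b
  induction p using Polynomial.induction_on with
  | C a => simpa [Algebra.algebraMap_eq_smul_one] using smul_mem _ a (subset_span (by simp))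
  | add p q hp hq => rw [map_add]; exact add_mem hp hq
  | monomial k a ih =>
    rw [pow_succ, ← mul_assoc, map_mul, Polynomial.aeval_X]
    exact hmul _ ih

open IsLocalRing

theorem maximalIdeal_R0_eq_span : maximalIdeal R0 = Ideal.span {xm, ym} := by
  have hmap : mIdeal.map (algebraMap _ R0) = Ideal.span {xm, ym} :=
    (Ideal.map_span (algebraMap _ R0) {X 0, X 1}).trans (by rw [Set.image_pair]; rfl)
  rw [← hmap, IsLocalization.AtPrime.map_eq_maximalIdeal]

theorem isUnit_algebraMap_R0_of_constantCoeff_ne_zero {q : MvPolynomial (Fin 2) ℝ}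
    (hq : constantCoeff q ≠ 0) : IsUnit (algebraMap (MvPolynomial (Fin 2) ℝ) R0 q) := by
  rw [IsLocalization.AtPrime.isUnit_to_map_iff R0 mIdeal, Ideal.mem_primeCompl_iff, mIdeal_eq_ker]
  exact hq

theorem exists_sub_C_mem_maximalIdeal_R0 (r : R0) :
    ∃ c : ℝ, r - algebraMap (MvPolynomial (Fin 2) ℝ) R0 (C c) ∈ maximalIdeal R0 := by
  obtain ⟨q, hq⟩ := (IsLocalization.AtPrime.equivQuotMaximalIdeal mIdeal R0).surjective
    (Ideal.Quotient.mk _ r)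
  obtain ⟨p, rfl⟩ := Ideal.Quotient.mk_surjective q
  rw [IsLocalization.AtPrime.equivQuotMaximalIdeal_apply_mk, Ideal.Quotient.eq] at hq
  have hp : p - C (constantCoeff p) ∈ mIdeal := by simp [mIdeal_eq_ker]
  refine ⟨constantCoeff p, ?_⟩
  have hp' := Ideal.mem_map_of_mem (algebraMap _ R0) hp
  rw [IsLocalization.AtPrime.map_eq_maximalIdeal] at hp'
  have := Ideal.sub_mem _ hp' hq
  rwa [map_sub, sub_sub_sub_cancel_left] at this

section BlownUpRing

variable {n : ℕ} {Fi : ℕ → MvPolynomial (Fin 2) ℝ}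

theorem algebraMap_R0_A'ring : algebraMap R0 (A'ring n Fi) = toA' n Fi := rfl

theorem toA'_xm_mul_zA' : toA' n Fi xm * zA' n Fi = toA' n Fi ym := by
  have hS : toS xm * zS = toS ym := by
    rw [toS, zS, RingHom.comp_apply, RingHom.comp_apply, ← map_mul, Ideal.Quotient.eq, sRel,
      Ideal.mem_span_singleton]
    exact ⟨-1, by ring⟩
  exact congrArg (Ideal.Quotient.mk _) hS

theorem toA'_xm_pow_mul_zA'_pow (j e : ℕ) :
    toA' n Fi xm ^ (j + e) * zA' n Fi ^ e = toA' n Fi (xm ^ j * ym ^ e) := by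
  rw [pow_add, mul_assoc, ← mul_pow, toA'_xm_mul_zA', map_mul, map_pow, map_pow]

variable (n Fi) in
theorem aeval_zA'_eq_mk (q : Polynomial R0) :
    Polynomial.aeval (zA' n Fi) q = Ideal.Quotient.mk _ (Ideal.Quotient.mk sRel q) := by
  induction q using Polynomial.induction_on with
  | C a => rw [Polynomial.aeval_C]; rfl
  | add p q hp hq => rw [map_add, hp, hq, map_add, map_add]
  | monomial k a ih =>
    rw [pow_succ, ← mul_assoc, map_mul, ih, map_mul (Ideal.Quotient.mk sRel), map_mul,
      Polynomial.aeval_X]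
    rfl

variable (n Fi) in
theorem aeval_zA'_surjective : Function.Surjective (Polynomial.aeval (R := R0) (zA' n Fi)) := by
  intro w
  obtain ⟨s, rfl⟩ := Ideal.Quotient.mk_surjective w
  obtain ⟨q, rfl⟩ := Ideal.Quotient.mk_surjective s
  exact ⟨q, aeval_zA'_eq_mk n Fi q⟩

theorem aeval_zA'_F'_eq_zero :
    Polynomial.aeval (zA' n Fi)
      (∑ i ∈ Finset.Icc 2 n, Polynomial.C xm ^ (i - 2) * subst1z (Fi i)) = 0 := by
  rw [aeval_zA'_eq_mk, Ideal.Quotient.eq_zero_iff_mem]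
  exact Ideal.mem_span_singleton_self (F'elem n Fi)

theorem aeval_zA'_subst1z (p : MvPolynomial (Fin 2) ℝ) :
    Polynomial.aeval (zA' n Fi) (subst1z p) =
      ∑ m ∈ p.support, constA' n Fi (coeff m p) * zA' n Fi ^ m 1 := by
  rw [subst1z, eval₂_eq', map_sum]
  refine Finset.sum_congr rfl fun m _ => ?_
  simp only [coeffHom, RingHom.coe_comp, Function.comp_apply, Fin.prod_univ_two,
    Matrix.cons_val_zero, Matrix.cons_val_one, Matrix.cons_val_fin_one, one_pow, one_mul, map_mul,
    map_pow, Polynomial.aeval_C, Polynomial.aeval_X]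
  rfl

theorem smul_eq_toA'_mul (r : R0) (w : A'ring n Fi) : r • w = toA' n Fi r * w :=
  Algebra.smul_def r w

theorem toA'_xm_pow_mul_zA'_pow_self (k : ℕ) :
    toA' n Fi xm ^ k * zA' n Fi ^ k = toA' n Fi (ym ^ k) := by
  simpa using toA'_xm_pow_mul_zA'_pow (n := n) (Fi := Fi) 0 k

theorem toA'_mul_mem_span (r : R0) {w : A'ring n Fi}
    (hw : w ∈ Submodule.span R0 {1, zA' n Fi}) :
    toA' n Fi r * w ∈ Submodule.span R0 {1, zA' n Fi} := by
  rw [← smul_eq_toA'_mul]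
  exact Submodule.smul_mem _ r hw

theorem toA'_xm_pow_mul_zA'_pow_mem_span {k b : ℕ} (hb : b ≤ k + 1) :
    toA' n Fi xm ^ k * zA' n Fi ^ b ∈ Submodule.span R0 {1, zA' n Fi} := by
  rcases Nat.lt_or_eq_of_le hb with hb | rfl
  · obtain ⟨j, rfl⟩ := Nat.exists_eq_add_of_le' (Nat.le_of_lt_succ hb)
    rw [toA'_xm_pow_mul_zA'_pow, ← mul_one (toA' n Fi _)]
    exact toA'_mul_mem_span _ (Submodule.subset_span (by simp))
  · rw [pow_succ, ← mul_assoc, toA'_xm_pow_mul_zA'_pow_self]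
    exact toA'_mul_mem_span _ (Submodule.subset_span (by simp))

theorem toA'_xm_pow_mul_aeval_subst1z_sub_mem_span {p : MvPolynomial (Fin 2) ℝ} {k : ℕ}
    (hp : p.IsHomogeneous (k + 2)) :
    toA' n Fi xm ^ k * Polynomial.aeval (zA' n Fi) (subst1z p)
        - constA' n Fi (coeff (Finsupp.single 1 (k + 2)) p) * toA' n Fi (ym ^ k) * zA' n Fi ^ 2
      ∈ Submodule.span R0 {1, zA' n Fi} := by
  classical
  set s : Fin 2 →₀ ℕ := Finsupp.single 1 (k + 2)
  have hs : constA' n Fi (coeff s p) * toA' n Fi (ym ^ k) * zA' n Fi ^ 2 =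
      ∑ m ∈ p.support,
        if m = s then constA' n Fi (coeff m p) * (toA' n Fi xm ^ k * zA' n Fi ^ m 1) else 0 := by
    rw [Finset.sum_ite_eq']
    split_ifs with hsp
    · rw [show s 1 = k + 2 by simp [s], pow_add, ← toA'_xm_pow_mul_zA'_pow_self]
      ring
    · simp [notMem_support_iff.mp hsp]
  rw [aeval_zA'_subst1z, Finset.mul_sum, hs, ← Finset.sum_sub_distrib]
  refine Submodule.sum_mem _ fun m hm => ?_
  split_ifs with hms
  · rw [mul_left_comm, sub_self]
    exact zero_mem _
  · have hm1 : m 1 ≤ k + 1 := by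
      have hdeg := hp.add_eq_of_mem_support hm
      by_contra! h
      refine hms (Finsupp.ext fun j => ?_)
      fin_cases j <;> simp [s] <;> omega
    rw [sub_zero, mul_left_comm]
    exact toA'_mul_mem_span _ (toA'_xm_pow_mul_zA'_pow_mem_span hm1)

theorem zA'_sq_mem_span (hn : 2 ≤ n) (hhom : ∀ i, (Fi i).IsHomogeneous i)
    (hc : coeff (Finsupp.single 1 2) (Fi 2) ≠ 0) :
    zA' n Fi ^ 2 ∈ Submodule.span R0 {1, zA' n Fi} := by
  set u : MvPolynomial (Fin 2) ℝ :=
    ∑ i ∈ Finset.Icc 2 n, C (coeff (Finsupp.single 1 i) (Fi i)) * X 1 ^ (i - 2)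
  have hu : IsUnit (algebraMap _ R0 u) := by
    refine isUnit_algebraMap_R0_of_constantCoeff_ne_zero ?_
    rw [map_sum, Finset.sum_eq_single_of_mem 2 (Finset.mem_Icc.mpr ⟨le_rfl, hn⟩)]
    · simpa using hc
    · intro i hi hi2
      simp [zero_pow (by grind : i - 2 ≠ 0)]
  have hsum : -(toA' n Fi (algebraMap _ R0 u) * zA' n Fi ^ 2) =
      ∑ i ∈ Finset.Icc 2 n, (toA' n Fi xm ^ (i - 2) * Polynomial.aeval (zA' n Fi) (subst1z (Fi i))
        - constA' n Fi (coeff (Finsupp.single 1 i) (Fi i)) * toA' n Fi (ym ^ (i - 2))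
          * zA' n Fi ^ 2) := by
    have hF' := aeval_zA'_F'_eq_zero (n := n) (Fi := Fi)
    simp only [map_sum, map_mul, map_pow, Polynomial.aeval_C, algebraMap_R0_A'ring] at hF'
    rw [Finset.sum_sub_distrib, hF', zero_sub, map_sum, map_sum, Finset.sum_mul]
    simp [constA', ym]
  have hmem : -(toA' n Fi (algebraMap _ R0 u) * zA' n Fi ^ 2) ∈
      Submodule.span R0 {1, zA' n Fi} := by
    rw [hsum]
    refine Submodule.sum_mem _ fun i hi => ?_
    obtain ⟨k, rfl⟩ := Nat.exists_eq_add_of_le' (Finset.mem_Icc.mp hi).1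
    simpa using toA'_xm_pow_mul_aeval_subst1z_sub_mem_span (n := n) (hhom (k + 2))
  rw [neg_mem_iff, ← smul_eq_toA'_mul] at hmem
  exact (Submodule.smul_mem_iff_of_isUnit _ hu).mp hmem

theorem toA'_xm_mul_mem_range (htop : Submodule.span R0 {1, zA' n Fi} = ⊤) (w : A'ring n Fi) :
    toA' n Fi xm * w ∈ (toA' n Fi).range := by
  obtain ⟨c, d, rfl⟩ := Submodule.mem_span_pair.mp (htop ▸ Submodule.mem_top : w ∈ _)
  refine ⟨c * xm + d * ym, ?_⟩
  rw [smul_eq_toA'_mul, smul_eq_toA'_mul, map_add, map_mul, map_mul, ← toA'_xm_mul_zA']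
  ring

theorem mem_range_of_mem_nId (htop : Submodule.span R0 {1, zA' n Fi} = ⊤) {v : A'ring n Fi}
    (hv : v ∈ nId n Fi) : v ∈ (toA' n Fi).range := by
  obtain ⟨a, b, rfl⟩ := Ideal.mem_span_pair.mp hv
  rw [← toA'_xm_mul_zA', mul_comm a, mul_comm b, mul_assoc]
  exact add_mem (toA'_xm_mul_mem_range htop a) (toA'_xm_mul_mem_range htop _)

theorem nId_eq_map_maximalIdeal : nId n Fi = (maximalIdeal R0).map (toA' n Fi) := by
  rw [maximalIdeal_R0_eq_span, Ideal.map_span, Set.image_pair, nId]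

end BlownUpRing

theorem blowup_image_of_A_general
    (n : ℕ) (hn : 2 ≤ n) (Fi : ℕ → MvPolynomial (Fin 2) ℝ)
    (hhom : ∀ i, (Fi i).IsHomogeneous i)
    (hF2irr : Irreducible (Fi 2))
    (π : Aring n Fi →+* A'ring n Fi)
    (hπ : π.comp (toA n Fi) = toA' n Fi) :
    Set.range π = {f : A'ring n Fi | ∃ c : ℝ, f - constA' n Fi c ∈ nId n Fi} := by
  have hy2 := coeff_single_one_ne_zero_of_irreducible (hhom 2) (by norm_num) hF2irr
  have htop : Submodule.span R0 {1, zA' n Fi} = ⊤ :=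
    Submodule.span_one_eq_top_of_sq_mem (aeval_zA'_surjective n Fi) (zA'_sq_mem_span hn hhom hy2)
  have hrange : Set.range π = Set.range (toA' n Fi) := by
    rw [← hπ, RingHom.coe_comp, Set.range_comp, toA, Ideal.Quotient.mk_surjective.range_eq,
      Set.image_univ]
  ext f
  rw [hrange]
  constructor
  · rintro ⟨r, rfl⟩
    obtain ⟨c, hc⟩ := exists_sub_C_mem_maximalIdeal_R0 r
    refine ⟨c, ?_⟩
    rw [nId_eq_map_maximalIdeal]
    simpa [constA'] using Ideal.mem_map_of_mem (toA' n Fi) hc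
  · rintro ⟨c, hc⟩
    obtain ⟨r, hr⟩ := mem_range_of_mem_nId htop hc
    refine ⟨r + algebraMap (MvPolynomial (Fin 2) ℝ) R0 (C c), ?_⟩
    rw [map_add, hr]
    exact sub_add_cancel f _

theorem blowup_image_of_A
    (n : ℕ) (hn : 2 ≤ n) (Fi : ℕ → MvPolynomial (Fin 2) ℝ)
    (hhom : ∀ i, (Fi i).IsHomogeneous i)
    (hF2ne : Fi 2 ≠ 0) (hF2irr : Irreducible (Fi 2))
    (π : Aring n Fi →+* A'ring n Fi)
    (hπ : π.comp (toA n Fi) = toA' n Fi) :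
    Set.range π = {f : A'ring n Fi | ∃ c : ℝ, f - constA' n Fi c ∈ nId n Fi} :=
  blowup_image_of_A_general n hn Fi hhom hF2irr π hπ
end
end

section
/- Let M be a symmetric d×d matrix whose entries are real homogeneous polynomials of degree two in x₀, x₁, x₂, and let F = det(M). Suppose the real zero set of F in ℝ³ ∖ {0} is contained in a finite union of lines through the origin, and suppose there exists a₀ ∈ ℝ³ such that M(a₀) is positive definite. Then M(a) is positive semidefinite for every a ∈ ℝ³; i.e., M is a positive quadratic representation of F. -/
/-!
Off the finitely many lines (and the origin) `det M(a) ≠ 0`. There the positive definite locus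
of `M` is open, and also relatively closed, because a positive semidefinite limit with nonzero
determinant is positive definite. Subspaces of codimension two do not disconnect `ℝ³` (two points
are joined through a generic third point by segments), so `M(a)` is positive definite on the whole
dense complement of the lines, hence positive semidefinite everywhere.
-/

open MvPolynomial Matrix Module Topology Metric

theorem segment_disjoint_of_notMem_sup {𝕜 E : Type*} [Field 𝕜] [LinearOrder 𝕜]
    [IsStrictOrderedRing 𝕜] [AddCommGroup E] [Module 𝕜 E] {L : Submodule 𝕜 E} {x b : E}
    (hx : x ∉ L) (hb : b ∉ (𝕜 ∙ x) ⊔ L) : Disjoint (segment 𝕜 x b) L := by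
  rw [Set.disjoint_left]
  rintro _ ⟨s, t, -, -, hst, rfl⟩ hy
  rcases eq_or_ne t 0 with rfl | ht
  · rw [add_zero] at hst
    rw [hst, one_smul, zero_smul, add_zero] at hy
    exact hx hy
  · refine hb ?_
    have hxL : x ∈ (𝕜 ∙ x) ⊔ L := Submodule.mem_sup_left (Submodule.mem_span_singleton_self x)
    have : b = t⁻¹ • ((s • x + t • b) - s • x) := by
      rw [add_sub_cancel_left, smul_smul, inv_mul_cancel₀ ht, one_smul]
    rw [this]
    exact Submodule.smul_mem _ _ (Submodule.sub_mem _ (Submodule.mem_sup_right hy)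
      (Submodule.smul_mem _ _ hxL))

section Subspaces

variable {E : Type*} [NormedAddCommGroup E] [NormedSpace ℝ E] [FiniteDimensional ℝ E]

theorem Submodule.dense_compl_iUnion {ι : Type*} [Countable ι] (W : ι → Submodule ℝ E)
    (hW : ∀ i, finrank ℝ (W i) < finrank ℝ E) : Dense (⋃ i, (W i : Set E))ᶜ := by
  rw [Set.compl_iUnion]
  refine dense_iInter_of_isOpen (fun i => (W i).closed_of_finiteDimensional.isOpen_compl)
    fun i => ?_
  rw [← interior_eq_empty_iff_dense_compl, ← Set.not_nonempty_iff_eq_empty]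
  intro h
  have := hW i
  rw [Submodule.eq_top_of_nonempty_interior' _ h, finrank_top] at this
  exact this.false

theorem Submodule.finrank_span_singleton_sup_lt (L : Submodule ℝ E) (x : E)
    (hL : finrank ℝ L + 2 ≤ finrank ℝ E) : finrank ℝ ↥((ℝ ∙ x) ⊔ L) < finrank ℝ E := by
  have hx : finrank ℝ (ℝ ∙ x) ≤ 1 := by
    simpa using finrank_span_le_card (R := ℝ) ({x} : Set E)
  have := Submodule.finrank_add_le_finrank_add_finrank (ℝ ∙ x) L
  omega

theorem Submodule.isPreconnected_compl_iUnion {ι : Type*} [Finite ι] (L : ι → Submodule ℝ E)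
    (hL : ∀ i, finrank ℝ (L i) + 2 ≤ finrank ℝ E) : IsPreconnected (⋃ i, (L i : Set E))ᶜ := by
  refine isPreconnected_of_forall_pair fun x hx y hy => ?_
  rw [Set.mem_compl_iff, Set.mem_iUnion, not_exists] at hx hy
  obtain ⟨b, hb⟩ := (Submodule.dense_compl_iUnion
    (Sum.elim (fun i => (ℝ ∙ x) ⊔ L i) (fun i => (ℝ ∙ y) ⊔ L i))
    (Sum.rec (fun i => (L i).finrank_span_singleton_sup_lt x (hL i))
      (fun i => (L i).finrank_span_singleton_sup_lt y (hL i)))).nonempty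
  simp only [Set.mem_compl_iff, Set.mem_iUnion, Sum.exists, Sum.elim_inl, Sum.elim_inr,
    SetLike.mem_coe, not_or, not_exists] at hb
  refine ⟨segment ℝ x b ∪ segment ℝ b y, ?_, Or.inl (left_mem_segment ℝ x b),
    Or.inr (right_mem_segment ℝ b y), ?_⟩
  · rw [segment_symm ℝ b y, Set.union_subset_iff, Set.subset_compl_iff_disjoint_right,
      Set.subset_compl_iff_disjoint_right, Set.disjoint_iUnion_right,
      Set.disjoint_iUnion_right]
    exact ⟨fun i => segment_disjoint_of_notMem_sup (hx i) (hb.1 i),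
      fun i => segment_disjoint_of_notMem_sup (hy i) (hb.2 i)⟩
  · exact (convex_segment x b).isPreconnected.union b (right_mem_segment ℝ x b)
      (left_mem_segment ℝ b y) (convex_segment b y).isPreconnected

end Subspaces

namespace Matrix

variable {X n : Type*} [TopologicalSpace X] [Fintype n]

theorem posDef_of_forall_mem_sphere {A : Matrix n n ℝ} (hA : A.IsHermitian)
    (h : ∀ v ∈ sphere (0 : n → ℝ) 1, 0 < v ⬝ᵥ A *ᵥ v) : A.PosDef := by
  refine .of_dotProduct_mulVec_pos hA fun v hv => ?_
  have hnorm : 0 < ‖v‖ := norm_pos_iff.mpr hv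
  have hu : ‖v‖⁻¹ • v ∈ sphere (0 : n → ℝ) 1 := by
    rw [mem_sphere_zero_iff_norm, norm_smul, norm_inv, norm_norm, inv_mul_cancel₀ hnorm.ne']
  have := h _ hu
  rw [mulVec_smul, smul_dotProduct, dotProduct_smul, smul_eq_mul, smul_eq_mul] at this
  simpa using pos_of_mul_pos_right (pos_of_mul_pos_right this (by positivity)) (by positivity)

theorem isOpen_setOf_posDef {A : X → Matrix n n ℝ} (hA : Continuous A)
    (hherm : ∀ x, (A x).IsHermitian) : IsOpen {x | (A x).PosDef} := by
  refine isOpen_iff_mem_nhds.mpr fun x hx => ?_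
  have hq : Continuous fun p : X × (n → ℝ) => p.2 ⬝ᵥ A p.1 *ᵥ p.2 :=
    continuous_snd.dotProduct ((hA.comp continuous_fst).matrix_mulVec continuous_snd)
  have : ∀ᶠ y in 𝓝 x, ∀ v ∈ sphere (0 : n → ℝ) 1, 0 < v ⬝ᵥ A y *ᵥ v :=
    (isCompact_sphere 0 1).eventually_forall_of_forall_eventually fun v hv =>
      (isOpen_lt continuous_const hq).mem_nhds
        (by simpa using hx.dotProduct_mulVec_pos (ne_zero_of_mem_unit_sphere ⟨v, hv⟩))
  filter_upwards [this] with y hy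
  exact posDef_of_forall_mem_sphere (hherm y) hy

theorem isClosed_setOf_posSemidef {A : X → Matrix n n ℝ} (hA : Continuous A) :
    IsClosed {x | (A x).PosSemidef} := by
  simp only [posSemidef_iff_dotProduct_mulVec, star_trivial, Set.ofPred_and, Set.ofPred_forall]
  exact (isClosed_eq hA.matrix_conjTranspose hA).inter (isClosed_iInter fun v =>
    isClosed_le continuous_const (continuous_const.dotProduct (hA.matrix_mulVec continuous_const)))

end Matrix

theorem posSemidef_everywhere_of_posDef_somewhere_general
    (d : ℕ) (M : Matrix (Fin d) (Fin d) (MvPolynomial (Fin 3) ℝ))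
    (hsymm : M.IsSymm)
    (hlines : ∃ (m : ℕ) (v : Fin m → (Fin 3 → ℝ)),
      ∀ a : Fin 3 → ℝ, a ≠ 0 → MvPolynomial.eval a M.det = 0 →
        ∃ (i : Fin m) (t : ℝ), a = t • v i)
    (hpd : ∃ a₀ : Fin 3 → ℝ, (M.map (MvPolynomial.eval a₀)).PosDef) :
    ∀ a : Fin 3 → ℝ, (M.map (MvPolynomial.eval a)).PosSemidef := by
  obtain ⟨m, v, hv⟩ := hlines
  obtain ⟨a₀, ha₀⟩ := hpd
  set A : (Fin 3 → ℝ) → Matrix (Fin d) (Fin d) ℝ := fun a => M.map (eval a)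
  have hA : Continuous A := continuous_pi fun i => continuous_pi fun j => continuous_eval (M i j)
  have hherm : ∀ a, (A a).IsHermitian := fun a => isHermitian_iff_isSymm.mpr (hsymm.map _)
  -- The origin is adjoined as a degenerate zero-th line.
  set w : Fin (m + 1) → Fin 3 → ℝ := Fin.cons 0 v
  set L : Fin (m + 1) → Submodule ℝ (Fin 3 → ℝ) := fun i => ℝ ∙ w i
  set S := ⋃ i, (L i : Set (Fin 3 → ℝ))
  have hL : ∀ i, finrank ℝ (L i) + 2 ≤ finrank ℝ (Fin 3 → ℝ) := fun i => by
    simpa using finrank_span_le_card (R := ℝ) {w i}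
  have hdet : ∀ a ∉ S, (A a).det ≠ 0 := by
    intro a ha hdet
    simp only [S, Set.mem_iUnion, not_exists] at ha
    have ha0 : a ≠ 0 := fun h => ha 0 (h ▸ zero_mem _)
    obtain ⟨i, t, rfl⟩ := hv a ha0 (by rwa [RingHom.map_det])
    exact ha i.succ (Submodule.smul_mem _ t (by simp [L, w]))
  have hPDopen := isOpen_setOf_posDef hA hherm
  have hPSDclosed := isClosed_setOf_posSemidef hA
  have hdense : Dense Sᶜ := Submodule.dense_compl_iUnion L fun i => by
    have := hL i; omega
  have hPD : Sᶜ ⊆ {a | (A a).PosDef} := by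
    refine (Submodule.isPreconnected_compl_iUnion L hL).subset_of_closure_inter_subset hPDopen
      (Set.inter_comm _ _ ▸ hdense.inter_open_nonempty _ hPDopen ⟨a₀, ha₀⟩) ?_
    rintro a ⟨ha, haS⟩
    have hPSD : (A a).PosSemidef := closure_minimal (fun b hb => hb.posSemidef) hPSDclosed ha
    exact hPSD.posDef_iff_det_ne_zero.mpr (hdet a haS)
  intro a
  exact closure_minimal (hPD.trans fun b hb => hb.posSemidef) hPSDclosed
    (hdense.closure_eq ▸ Set.mem_univ a)

/-- Let `M` be a symmetric matrix of real homogeneous quadratic forms with `F = det M`.  If the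
real zero set of `F` in `ℝ³ ∖ {0}` is contained in a finite union of lines through the origin,
and `M` is positive definite at some real point, then `M` is positive semidefinite at every
real point, i.e. `M` is a positive quadratic representation of `F`. -/
theorem posSemidef_everywhere_of_posDef_somewhere
    (d : ℕ) (M : Matrix (Fin d) (Fin d) (MvPolynomial (Fin 3) ℝ))
    (hsymm : M.IsSymm)
    (hhom : ∀ i j, (M i j).IsHomogeneous 2)
    (hlines : ∃ (m : ℕ) (v : Fin m → (Fin 3 → ℝ)),
      ∀ a : Fin 3 → ℝ, a ≠ 0 → MvPolynomial.eval a M.det = 0 →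
        ∃ (i : Fin m) (t : ℝ), a = t • v i)
    (hpd : ∃ a₀ : Fin 3 → ℝ, (M.map (MvPolynomial.eval a₀)).PosDef) :
    ∀ a : Fin 3 → ℝ, (M.map (MvPolynomial.eval a)).PosSemidef :=
  posSemidef_everywhere_of_posDef_somewhere_general d M hsymm hlines hpd
end

section
/- Let a₀₀, a₁₀, a₁₁ ∈ ℂ[x₀,x₁,x₂] be homogeneous polynomials of degree two such that a₀₀ and a₁₀ are linearly independent over ℂ and a₀₀·a₁₁ = a₁₀². Then a₀₀ is the square of a homogeneous polynomial of degree one. -/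
/-!
If `a₀₀` were squarefree, `a₀₀ ∣ a₁₀²` would give `a₀₀ ∣ a₁₀`, and comparing degrees
`a₁₀ = c • a₀₀`, against linear independence. So `a₀₀ = x² y` with `x` not a unit; comparing
total degrees, `x` has degree one and `y` is a nonzero constant, and `x` has no constant term
because `a₀₀` has none. Over `ℂ` the constant `y` is a square.
-/

open MvPolynomial

namespace MvPolynomial

variable {σ R K : Type*}

theorem isHomogeneous_one_of_totalDegree_le_one [CommSemiring R] {x : MvPolynomial σ R}
    (hdeg : x.totalDegree ≤ 1) (hconst : constantCoeff x = 0) : x.IsHomogeneous 1 := by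
  intro d hd
  have hd0 : d ≠ 0 := by rintro rfl; exact hd hconst
  have hle : d.degree ≤ 1 := (le_totalDegree (mem_support_iff.2 hd)).trans hdeg
  have hpos : d.degree ≠ 0 := (Finsupp.degree_eq_zero_iff d).not.2 hd0
  rw [Finsupp.degree_eq_weight_one] at hle hpos
  exact le_antisymm hle (Nat.one_le_iff_ne_zero.2 hpos)

theorem totalDegree_pos_of_not_isUnit [Field K] {x : MvPolynomial σ K} (hx0 : x ≠ 0)
    (hx : ¬IsUnit x) : 0 < x.totalDegree := by
  refine Nat.pos_of_ne_zero fun hdeg => hx ?_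
  rw [totalDegree_eq_zero_iff_eq_C.1 hdeg] at hx0 ⊢
  exact (isUnit_iff_ne_zero.2 fun h => hx0 (by rw [h, map_zero])).map C

namespace IsHomogeneous

theorem exists_eq_C_mul_of_dvd [CommRing R] [IsDomain R] {p r : MvPolynomial σ R} {n : ℕ}
    (hp : p.IsHomogeneous n) (hr : r.IsHomogeneous n) (hp0 : p ≠ 0) (hpr : p ∣ r) :
    ∃ c, r = C c * p := by
  obtain ⟨q, rfl⟩ := hpr
  rcases eq_or_ne q 0 with rfl | hq0
  · exact ⟨0, by simp⟩
  have hdeg : p.totalDegree + q.totalDegree = p.totalDegree := by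
    rw [← totalDegree_mul_of_isDomain hp0 hq0, hr.totalDegree (mul_ne_zero hp0 hq0),
      hp.totalDegree hp0]
  exact ⟨q.coeff 0, by rw [mul_comm, ← totalDegree_eq_zero_iff_eq_C.1 (by omega)]⟩

theorem exists_eq_C_mul_sq_of_not_squarefree [Field K] {p : MvPolynomial σ K}
    (hp : p.IsHomogeneous 2) (hp0 : p ≠ 0) (hsq : ¬Squarefree p) :
    ∃ (c : K) (x : MvPolynomial σ K), x.IsHomogeneous 1 ∧ p = C c * x ^ 2 := by
  obtain ⟨x, ⟨y, rfl⟩, hx⟩ : ∃ x, x * x ∣ p ∧ ¬IsUnit x := by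
    simpa [Squarefree] using hsq
  obtain ⟨hxx0, hy0⟩ := mul_ne_zero_iff.1 hp0
  have hx0 := (mul_ne_zero_iff.1 hxx0).1
  have hdeg : x.totalDegree + x.totalDegree + y.totalDegree = 2 := by
    rw [← totalDegree_mul_of_isDomain hx0 hx0, ← totalDegree_mul_of_isDomain hxx0 hy0,
      hp.totalDegree hp0]
  have hxpos := totalDegree_pos_of_not_isUnit hx0 hx
  have hy : y = C (y.coeff 0) := totalDegree_eq_zero_iff_eq_C.1 (by omega)
  have hyc : y.coeff 0 ≠ 0 := fun h => hy0 (by rw [hy, h, map_zero])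
  have hconst : constantCoeff x ^ 2 * y.coeff 0 = 0 := by
    rw [← hp.coeff_eq_zero (d := 0) (by simp), ← constantCoeff_eq, map_mul, map_mul, hy,
      constantCoeff_C, sq]
  refine ⟨y.coeff 0, x, isHomogeneous_one_of_totalDegree_le_one (by omega) ?_, ?_⟩
  · simpa [hyc] using hconst
  · rw [hy, coeff_zero_C]
    ring

theorem exists_eq_sq_of_not_squarefree [Field K] [IsAlgClosed K] {p : MvPolynomial σ K}
    (hp : p.IsHomogeneous 2) (hsq : ¬Squarefree p) :
    ∃ l : MvPolynomial σ K, l.IsHomogeneous 1 ∧ p = l ^ 2 := by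
  rcases eq_or_ne p 0 with rfl | hp0
  · exact ⟨0, isHomogeneous_zero _ _ _, by simp⟩
  obtain ⟨c, x, hx, rfl⟩ := hp.exists_eq_C_mul_sq_of_not_squarefree hp0 hsq
  obtain ⟨d, rfl⟩ := IsAlgClosed.exists_pow_nat_eq c two_pos
  exact ⟨C d * x, by simpa using (isHomogeneous_C σ d).mul hx, by rw [map_pow]; ring⟩

end IsHomogeneous

end MvPolynomial

theorem conic_is_square_of_product_eq_square_general
    (a00 a10 a11 : MvPolynomial (Fin 3) ℂ)
    (h00 : a00.IsHomogeneous 2) (h10 : a10.IsHomogeneous 2)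
    (hindep : LinearIndependent ℂ ![a00, a10])
    (heq : a00 * a11 = a10 ^ 2) :
    ∃ l : MvPolynomial (Fin 3) ℂ, l.IsHomogeneous 1 ∧ a00 = l ^ 2 := by
  have h0 : a00 ≠ 0 := by simpa using hindep.ne_zero 0
  refine h00.exists_eq_sq_of_not_squarefree fun hsf => ?_
  have hdvd : a00 ∣ a10 := (hsf.dvd_pow_iff_dvd two_ne_zero).1 ⟨a11, heq.symm⟩
  obtain ⟨c, hc⟩ := h00.exists_eq_C_mul_of_dvd h10 h0 hdvd
  exact (LinearIndependent.pair_iff' h0).1 hindep c (by rw [hc, smul_eq_C_mul])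

/-- If `a₀₀, a₁₀, a₁₁` are complex homogeneous quadratic ternary forms with `a₀₀, a₁₀` linearly
independent and `a₀₀ · a₁₁ = a₁₀²`, then `a₀₀` is the square of a homogeneous linear form. -/
theorem conic_is_square_of_product_eq_square
    (a00 a10 a11 : MvPolynomial (Fin 3) ℂ)
    (h00 : a00.IsHomogeneous 2) (h10 : a10.IsHomogeneous 2) (h11 : a11.IsHomogeneous 2)
    (hindep : LinearIndependent ℂ ![a00, a10])
    (heq : a00 * a11 = a10 ^ 2) :
    ∃ l : MvPolynomial (Fin 3) ℂ, l.IsHomogeneous 1 ∧ a00 = l ^ 2 :=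
  conic_is_square_of_product_eq_square_general a00 a10 a11 h00 h10 hindep heq
end
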